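/- Let p be a prime, d ≥ 1, V = F_p^d, and let G be an irreducible subgroup of GL(V). Then for every nonzero orbit O of G on V, the d(p−1)-fold sumset of O ∪ {0} equals V. (This is the sumset formulation of the statement that the directed orbital diameter of VG is at most d(p−1).) -/

import Mathlib

/-- The `m`-fold sumset of a subset `Δ` of an additive commutative monoid. -/
def sumset {V : Type*} [AddCommMonoid V] (m : ℕ) (Δ : Set V) : Set V :=
  {x | ∃ f : Fin m → V, (∀ i, f i ∈ Δ) ∧ ∑ i, f i = x}

/-- The orbit of a vector `v` under a subgroup `G` of the general linear group
(realized as units of the endomorphism ring). -/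
def orbitOf {R V : Type*} [CommSemiring R] [AddCommMonoid V] [Module R V]
    (G : Subgroup (Module.End R V)ˣ) (v : V) : Set V :=
  {w | ∃ g ∈ G, (g : Module.End R V) v = w}

/-- A linear group `G ≤ GL(V)` is irreducible if the only `G`-invariant subspaces
of `V` are `0` and `V`. -/
def IsIrreducibleLinearGroup {R V : Type*} [CommSemiring R] [AddCommMonoid V] [Module R V]
    (G : Subgroup (Module.End R V)ˣ) : Prop :=
  ∀ W : Submodule R V, (∀ g ∈ G, ∀ w ∈ W, (g : Module.End R V) w ∈ W) → W = ⊥ ∨ W = ⊤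

/-!
The span of a nonzero orbit is a nonzero `G`-invariant subspace, so by irreducibility it is all
of `V`; hence the orbit contains a basis `b₁, …, b_d`. Every vector is `∑ cᵢ bᵢ` with
`0 ≤ cᵢ ≤ p - 1`, i.e. a sum of `d (p - 1)` elements of the orbit together with `0`.
-/

open Module Pointwise

theorem sumset_eq_nsmul {V : Type*} [AddCommMonoid V] (m : ℕ) (Δ : Set V) :
    sumset m Δ = m • Δ := by
  ext x
  exact Set.mem_nsmul_iff_sum.symm

theorem Set.sum_mem_card_nsmul {ι α : Type*} [Fintype ι] [AddCommMonoid α] {s : Set α}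
    {f : ι → α} (hf : ∀ i, f i ∈ s) : ∑ i, f i ∈ Fintype.card ι • s := by
  simpa using Set.finsetSum_mem_finsetSum Finset.univ (fun _ ↦ s) f fun i _ ↦ hf i

theorem ZMod.smul_mem_nsmul {n : ℕ} [NeZero n] {V : Type*} [AddCommGroup V] [Module (ZMod n) V]
    {s : Set V} (h0 : 0 ∈ s) {x : V} (hx : x ∈ s) (c : ZMod n) : c • x ∈ (n - 1) • s := by
  have hc : c • x = c.val • x := by
    rw [← Nat.cast_smul_eq_nsmul (ZMod n), ZMod.natCast_zmod_val]
  rw [hc]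
  exact Set.nsmul_subset_nsmul_right h0 (Nat.le_sub_one_of_lt c.val_lt) (Set.nsmul_mem_nsmul hx)

theorem ZMod.nsmul_eq_univ_of_basis_subset {n : ℕ} [NeZero n] {ι V : Type*} [Finite ι]
    [AddCommGroup V] [Module (ZMod n) V] (b : Basis ι (ZMod n) V) {s : Set V} (h0 : 0 ∈ s)
    (hb : ∀ i, b i ∈ s) : (Nat.card ι * (n - 1)) • s = Set.univ := by
  cases nonempty_fintype ι
  refine Set.eq_univ_of_forall fun x ↦ ?_
  rw [← b.sum_repr x, Nat.card_eq_fintype_card, mul_nsmul']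
  exact Set.sum_mem_card_nsmul fun i ↦ ZMod.smul_mem_nsmul h0 (hb i) _

section LinearGroup

variable {R V : Type*} [CommSemiring R] [AddCommMonoid V] [Module R V]
  {G : Subgroup (Module.End R V)ˣ}

theorem map_mem_orbitOf {g : (Module.End R V)ˣ} (hg : g ∈ G) {v w : V} (hw : w ∈ orbitOf G v) :
    (g : Module.End R V) w ∈ orbitOf G v := by
  obtain ⟨h, hh, rfl⟩ := hw
  exact ⟨g * h, mul_mem hg hh, rfl⟩

theorem map_mem_span_orbitOf {g : (Module.End R V)ˣ} (hg : g ∈ G) {v w : V}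
    (hw : w ∈ Submodule.span R (orbitOf G v)) :
    (g : Module.End R V) w ∈ Submodule.span R (orbitOf G v) := by
  have hw' := Submodule.mem_map_of_mem (f := (g : Module.End R V)) hw
  rw [← Submodule.span_image] at hw'
  refine Submodule.span_mono ?_ hw'
  rintro _ ⟨u, hu, rfl⟩
  exact map_mem_orbitOf hg hu

theorem IsIrreducibleLinearGroup.span_orbitOf_eq_top (hirr : IsIrreducibleLinearGroup G)
    {v : V} (hv : v ≠ 0) : Submodule.span R (orbitOf G v) = ⊤ := by
  refine (hirr _ fun g hg w hw ↦ map_mem_span_orbitOf hg hw).resolve_left fun hbot ↦ hv ?_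
  have hv_mem : v ∈ Submodule.span R (orbitOf G v) := Submodule.subset_span ⟨1, one_mem G, rfl⟩
  simpa [hbot] using hv_mem

end LinearGroup

theorem diam_le_d_mul_p_sub_one_general (p d : ℕ) (hp : p.Prime)
    (G : Subgroup (Module.End (ZMod p) (Fin d → ZMod p))ˣ)
    (hirr : IsIrreducibleLinearGroup G)
    (v : Fin d → ZMod p) (hv : v ≠ 0) :
    sumset (d * (p - 1)) (orbitOf G v ∪ {0}) = Set.univ := by
  have : Fact p.Prime := ⟨hp⟩
  let b := Basis.ofSpan (hirr.span_orbitOf_eq_top hv).ge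
  have hcard := (Module.finrank_eq_nat_card_basis b).symm.trans (Module.finrank_fin_fun (ZMod p))
  have hb := ZMod.nsmul_eq_univ_of_basis_subset b (s := orbitOf G v ∪ {0}) (Or.inr rfl)
    fun i ↦ Or.inl (Basis.ofSpan_subset _ ⟨i, rfl⟩)
  rwa [hcard, ← sumset_eq_nsmul] at hb

theorem diam_le_d_mul_p_sub_one (p d : ℕ) (hp : p.Prime) (hd : 1 ≤ d)
    (G : Subgroup (Module.End (ZMod p) (Fin d → ZMod p))ˣ)
    (hirr : IsIrreducibleLinearGroup G)
    (v : Fin d → ZMod p) (hv : v ≠ 0) :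
    sumset (d * (p - 1)) (orbitOf G v ∪ {0}) = Set.univ :=
  diam_le_d_mul_p_sub_one_general p d hp G hirr v hv
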